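/- In the symmetric slotted-ALOHA game with power-based cost and identical parameters, ∂V_i/∂q_i evaluated at the symmetric point q·1 (all players using probability q ∈ (0,1)) equals -(M/q)·f(q), where f(q) = a·q²·(1-q)^(2N-3) + q - c, a = A/M, c = C/M. -/

import Mathlib

open Finset

noncomputable def gammaT {N : ℕ} (q : Fin N → ℝ) (i : Fin N) : ℝ :=
  q i * ∏ j ∈ univ.erase i, (1 - q j)

noncomputable def altrF {N : ℕ} (q : Fin N → ℝ) (i : Fin N) : ℝ :=
  ∏ j ∈ univ.erase i, (1 - q j)

noncomputable def gammaBar {N : ℕ} (q : Fin N → ℝ) (i : Fin N) : ℝ :=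
  (1 / (N - 1 : ℝ)) * ∑ j ∈ univ.erase i, gammaT q j

noncomputable def Vnet {N : ℕ} (C A M : ℝ) (q : Fin N → ℝ) (i : Fin N) : ℝ :=
  C * Real.log (gammaT q i) + A * altrF q i * gammaBar q i - M * q i

/-! When all opponents play `q` and player `i` plays `t`, every opponent has throughput
`q (1 - t) (1 - q)^(N-2)`, so `V_i` is `C log t` plus an affine function of `t`; its derivative
at `t = q` is `C / q - A q (1 - q)^(2N-3) - M`. -/

section UpdateConst

variable {ι : Type*} [DecidableEq ι] (q t : ℝ) (i : ι) {s : Finset ι}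

lemma prod_one_sub_update_const :
    ∏ j ∈ s, (1 - Function.update (fun _ : ι => q) i t j)
      = ∏ j ∈ s, Function.update (fun _ => 1 - q) i (1 - t) j :=
  prod_congr rfl fun j _ => congrFun (Function.comp_update (fun x : ℝ => 1 - x) _ i t) j

lemma prod_one_sub_update_const_of_notMem (h : i ∉ s) :
    ∏ j ∈ s, (1 - Function.update (fun _ : ι => q) i t j) = (1 - q) ^ #s := by
  rw [prod_one_sub_update_const, prod_update_of_notMem h, prod_const]

lemma prod_one_sub_update_const_of_mem (h : i ∈ s) :
    ∏ j ∈ s, (1 - Function.update (fun _ : ι => q) i t j) = (1 - t) * (1 - q) ^ (#s - 1) := by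
  rw [prod_one_sub_update_const, prod_update_of_mem h, prod_const, card_sdiff_of_subset (by simpa), card_singleton]

end UpdateConst

section SymmetricProfile

variable {N : ℕ} (q t : ℝ) (i : Fin N)

lemma altrF_update_const :
    altrF (Function.update (fun _ : Fin N => q) i t) i = (1 - q) ^ (N - 1) := by
  rw [altrF, prod_one_sub_update_const_of_notMem q t i (notMem_erase i univ),
    card_erase_of_mem (mem_univ i), card_univ, Fintype.card_fin]

lemma gammaT_update_const_self :
    gammaT (Function.update (fun _ : Fin N => q) i t) i = t * (1 - q) ^ (N - 1) := by
  rw [gammaT, ← altrF, altrF_update_const, Function.update_self]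

lemma gammaT_update_const_of_ne {j : Fin N} (h : j ≠ i) :
    gammaT (Function.update (fun _ : Fin N => q) i t) j = q * (1 - t) * (1 - q) ^ (N - 2) := by
  rw [gammaT, Function.update_of_ne h,
    prod_one_sub_update_const_of_mem q t i (mem_erase.mpr ⟨h.symm, mem_univ i⟩),
    card_erase_of_mem (mem_univ j), card_univ, Fintype.card_fin, Nat.sub_sub, mul_assoc]

lemma gammaBar_update_const (hN : 2 ≤ N) :
    gammaBar (Function.update (fun _ : Fin N => q) i t) i = q * (1 - t) * (1 - q) ^ (N - 2) := by
  have hN1 : (N : ℝ) - 1 ≠ 0 := by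
    have : (2 : ℝ) ≤ N := by exact_mod_cast hN
    linarith
  rw [gammaBar, sum_congr rfl fun j hj => gammaT_update_const_of_ne q t i (ne_of_mem_erase hj),
    sum_const, card_erase_of_mem (mem_univ i), card_univ, Fintype.card_fin, nsmul_eq_mul,
    Nat.cast_pred (by omega)]
  field_simp

lemma Vnet_update_const (hN : 2 ≤ N) (C A M : ℝ) :
    Vnet C A M (Function.update (fun _ : Fin N => q) i t) i
      = C * Real.log (t * (1 - q) ^ (N - 1)) + A * q * (1 - q) ^ (2 * N - 3) * (1 - t) - M * t := by
  have hexp : N - 1 + (N - 2) = 2 * N - 3 := by omega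
  rw [Vnet, gammaT_update_const_self, altrF_update_const, gammaBar_update_const q t i hN,
    Function.update_self, ← hexp, pow_add]
  ring

end SymmetricProfile

theorem stmt_13 (N : ℕ) (hN : 2 ≤ N) (C A M : ℝ) (hM : 0 < M)
    (q : ℝ) (hq : q ∈ Set.Ioo (0 : ℝ) 1) (i : Fin N) :
    deriv (fun t => Vnet C A M (Function.update (fun _ : Fin N => q) i t) i) q =
      -(M / q) *
        ((A / M) * q ^ 2 * (1 - q) ^ (2 * N - 3) + q - C / M) := by
  obtain ⟨hq0, hq1⟩ := hq
  set P := (1 - q) ^ (N - 1)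
  set B := A * q * (1 - q) ^ (2 * N - 3)
  have hP : P ≠ 0 := pow_ne_zero _ (sub_ne_zero.mpr hq1.ne')
  have hderiv : HasDerivAt (fun t => C * Real.log (t * P) + B * (1 - t) - M * t)
      (C * (1 * P / (q * P)) + B * (0 - 1) - M * 1) q :=
    ((((hasDerivAt_id' q).mul_const P).log (mul_ne_zero hq0.ne' hP)).const_mul C
      |>.add (((hasDerivAt_const q 1).sub (hasDerivAt_id' q)).const_mul B)).sub
      ((hasDerivAt_id' q).const_mul M)
  simp_rw [Vnet_update_const q _ i hN]
  rw [hderiv.deriv]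
  field_simp
  ring
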